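/- (Laguerre–Samuelson inequality) Let $P$ be a monic real polynomial of degree $n \ge 2$ all of whose roots are real, with $P(x) = x^n - b_1 x^{n-1} + b_2 x^{n-2} - \cdots$. Then every root $x$ of $P$ satisfies $\frac{1}{n}\Big[b_1 - (n-1)\sqrt{b_1^2 - \tfrac{2n}{n-1} b_2}\Big] \le x \le \frac{1}{n}\Big[b_1 + (n-1)\sqrt{b_1^2 - \tfrac{2n}{n-1} b_2}\Big]$, equivalently $\tfrac{1}{n}\big[b_1 \pm \sqrt{(n-1)^2 b_1^2 - 2(n-1)n\, b_2}\,\big]$ bound all roots. -/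

import Mathlib

/-!
Writing `S = ∑ xᵢ` and `Q = ∑ xᵢ²`, Cauchy–Schwarz applied to the other `n - 1` roots gives
`(S - x_k)² ≤ (n - 1)(Q - x_k²)`, which rearranges to `(n x_k - S)² ≤ (n - 1)(n Q - S²)`.
Since `Q = b₁² - 2 b₂`, the right-hand side is exactly `(n - 1)² b₁² - 2 (n - 1) n b₂`.
-/

open Finset

theorem sq_sum_eq_sum_sq_add_two_mul_sum_lt {ι R : Type*} [Fintype ι] [LinearOrder ι]
    [CommSemiring R] (x : ι → R) :
    (∑ i, x i) ^ 2 = ∑ i, x i ^ 2 + 2 * ∑ i, ∑ j, if i < j then x i * x j else 0 := by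
  have split (i j : ι) : x i * x j =
      (if i = j then x i ^ 2 else 0) + (if i < j then x i * x j else 0) +
        (if j < i then x j * x i else 0) := by
    rcases lt_trichotomy i j with h | rfl | h
    · simp [h, h.ne, h.not_gt]
    · simp [sq]
    · simp [h, h.ne', h.not_gt, mul_comm]
  rw [sq, sum_mul_sum, two_mul,
    Fintype.sum_congr _ _ fun i => Fintype.sum_congr _ _ fun j => split i j]
  simp only [sum_add_distrib, sum_ite_eq, mem_univ, if_true]
  rw [sum_comm (f := fun i j => if j < i then x j * x i else 0), add_assoc]

theorem sq_card_mul_sub_sum_le {ι R : Type*} [DecidableEq ι] [CommRing R] [LinearOrder R]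
    [IsStrictOrderedRing R] {s : Finset ι} {k : ι} (hk : k ∈ s) (x : ι → R) :
    (#s * x k - ∑ i ∈ s, x i) ^ 2 ≤ (#s - 1) * (#s * ∑ i ∈ s, x i ^ 2 - (∑ i ∈ s, x i) ^ 2) := by
  have cauchy_schwarz := sq_sum_le_card_mul_sum_sq (s := s.erase k) (f := x)
  rw [card_erase_of_mem hk, Nat.cast_pred (card_pos.mpr ⟨k, hk⟩), sum_erase_eq_sub hk,
    sum_erase_eq_sub hk] at cauchy_schwarz
  linear_combination (#s : R) * cauchy_schwarz

theorem stmt14_general (n : ℕ) (x : Fin n → ℝ)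
    (b1 b2 : ℝ) (hb1 : b1 = ∑ i : Fin n, x i)
    (hb2 : b2 = ∑ i : Fin n, ∑ j : Fin n, if i < j then x i * x j else 0) :
    ∀ k : Fin n,
      (b1 - Real.sqrt ((n - 1) ^ 2 * b1 ^ 2 - 2 * (n - 1) * n * b2)) / n ≤ x k ∧
      x k ≤ (b1 + Real.sqrt ((n - 1) ^ 2 * b1 ^ 2 - 2 * (n - 1) * n * b2)) / n := by
  intro k
  have hn : (0 : ℝ) < n := by exact_mod_cast k.pos
  have hQ := sq_sum_eq_sum_sq_add_two_mul_sum_lt x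
  rw [← hb1, ← hb2] at hQ
  have hkey : ((n : ℝ) * x k - b1) ^ 2 ≤ (n - 1) ^ 2 * b1 ^ 2 - 2 * (n - 1) * n * b2 := by
    have := sq_card_mul_sub_sum_le (mem_univ k) x
    rw [card_univ, Fintype.card_fin, ← hb1] at this
    linear_combination this - ((n : ℝ) - 1) * n * hQ
  obtain ⟨hlow, hupp⟩ := abs_le.mp (Real.abs_le_sqrt hkey)
  constructor
  · rw [div_le_iff₀ hn]; linarith
  · rw [le_div_iff₀ hn]; linarith

/-- Laguerre–Samuelson: If `x₁, …, xₙ` (`n ≥ 2`) are the (real)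
roots of a monic polynomial with `b₁ = ∑ xᵢ` and `b₂ = ∑_{i<j} xᵢxⱼ`, then every
root lies in `[ (b₁ - √((n-1)²b₁² - 2(n-1)n b₂))/n , (b₁ + √(…))/n ]`. -/
theorem stmt14 (n : ℕ) (hn : 2 ≤ n) (x : Fin n → ℝ)
    (b1 b2 : ℝ) (hb1 : b1 = ∑ i : Fin n, x i)
    (hb2 : b2 = ∑ i : Fin n, ∑ j : Fin n, if i < j then x i * x j else 0) :
    ∀ k : Fin n,
      (b1 - Real.sqrt ((n - 1) ^ 2 * b1 ^ 2 - 2 * (n - 1) * n * b2)) / n ≤ x k ∧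
      x k ≤ (b1 + Real.sqrt ((n - 1) ^ 2 * b1 ^ 2 - 2 * (n - 1) * n * b2)) / n :=
  stmt14_general n x b1 b2 hb1 hb2
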